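/- Let V be a finite-dimensional real vector space with a nondegenerate quadratic form Q of signature (p,q), p ≥ 1, q ≥ 1, with associated symmetric bilinear form B. Let x, y ∈ V satisfy Q(x) < 0 and Q(y) < 0. Suppose that every p-dimensional subspace W ⊆ V on which Q is positive definite and which satisfies W ⊆ x^⊥ (i.e., B(w,x) = 0 for all w ∈ W) also satisfies W ⊆ y^⊥. Then y is a scalar multiple of x. (Equivalently: the set S_x of positive p-planes orthogonal to a negative vector x determines x up to proportionality.) -/

import Mathlib

open QuadraticMap

/-- `Q` has signature `(p, q)`: there is an orthogonal basis with `p` vectors of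
square `1` and `q` vectors of square `-1`. -/
def HasSignature {V : Type*} [AddCommGroup V] [Module ℝ V]
    (Q : QuadraticForm ℝ V) (p q : ℕ) : Prop :=
  ∃ b : Module.Basis (Fin p ⊕ Fin q) ℝ V,
    (∀ i j, i ≠ j → polar Q (b i) (b j) = 0) ∧
    (∀ i, Q (b (Sum.inl i)) = 1) ∧ (∀ j, Q (b (Sum.inr j)) = -1)

/-!
Let `π` be the projection onto `x^⊥` along `x`. As `Q x < 0`, `Q v ≤ Q (π v)`, so `π` maps every
positive `p`-plane `W` isomorphically onto a positive `p`-plane orthogonal to `x`, which is then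
orthogonal to `y`; since `π` is self-adjoint for `polar Q`, `W` is orthogonal to `π y`. The
positive `p`-planes span `V` (the coordinate plane together with its tilts towards each negative
basis vector), so `π y` lies in the radical of `polar Q`, which is zero: `π y = 0`, i.e. `y ∈ ℝ x`.
-/

open Module Submodule

namespace QuadraticMap

section CommRing

variable {R M N : Type*} [CommRing R] [AddCommGroup M] [Module R M] [AddCommGroup N]
  [Module R N] {Q : QuadraticMap R M N}

theorem map_sum_of_pairwise_polar_eq_zero {ι : Type*} (s : Finset ι) {g : ι → M}
    (hg : Pairwise fun i j ↦ polar Q (g i) (g j) = 0) :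
    Q (∑ i ∈ s, g i) = ∑ i ∈ s, Q (g i) := by
  classical
  rw [Q.map_sum, add_eq_left]
  refine Finset.sum_eq_zero fun ij hij ↦ ?_
  induction ij using Sym2.ind with
  | h i j =>
    rw [Finset.mem_filter, Sym2.mk_isDiag_iff] at hij
    exact hg hij.2

theorem map_sum_smul_of_pairwise_polar_eq_zero {ι : Type*} (s : Finset ι) {g : ι → M}
    (hg : Pairwise fun i j ↦ polar Q (g i) (g j) = 0) (a : ι → R) :
    Q (∑ i ∈ s, a i • g i) = ∑ i ∈ s, a i ^ 2 • Q (g i) := by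
  rw [map_sum_of_pairwise_polar_eq_zero]
  · simp only [QuadraticMap.map_smul, pow_two]
  · intro i j hij
    rw [polar_smul_left, polar_smul_right, hg hij, smul_zero, smul_zero]

theorem pairwise_polar_update_eq_zero {ι : Type*} [DecidableEq ι] {g : ι → M}
    (hg : Pairwise fun i j ↦ polar Q (g i) (g j) = 0)
    {i₀ : ι} {v : M} (hv : ∀ k ≠ i₀, polar Q v (g k) = 0) :
    Pairwise fun i j ↦ polar Q (Function.update g i₀ v i) (Function.update g i₀ v j) = 0 := by
  intro i j hij
  rcases eq_or_ne i i₀ with rfl | hi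
  · simp [Function.update_of_ne hij.symm, hv j hij.symm]
  rcases eq_or_ne j i₀ with rfl | hj
  · simp [Function.update_of_ne hi, polar_comm Q (g i), hv i hi]
  simp [Function.update_of_ne hi, Function.update_of_ne hj, hg hij]

end CommRing

section Field

variable {K V : Type*} [Field K] [AddCommGroup V] [Module K V] {Q : QuadraticForm K V} {x : V}

/-- The projection onto `x^⊥` along `x`; it is the identity when `polar Q x x = 0`. -/
def orthProj (Q : QuadraticForm K V) (x : V) : V →ₗ[K] V :=
  LinearMap.id - ((polar Q x x)⁻¹ • Q.polarBilin x).smulRight x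

theorem orthProj_apply (v : V) :
    orthProj Q x v = v - (polar Q x v / polar Q x x) • x := by
  simp [orthProj, div_eq_inv_mul]

theorem polar_orthProj_left (v w : V) :
    polar Q (orthProj Q x v) w = polar Q v (orthProj Q x w) := by
  simp only [orthProj_apply, polar_sub_left, polar_sub_right, polar_smul_left, polar_smul_right,
    smul_eq_mul, polar_comm Q x]
  ring

theorem orthProj_self (hx : polar Q x x ≠ 0) : orthProj Q x x = 0 := by
  rw [orthProj_apply, div_self hx, one_smul, sub_self]

theorem polar_orthProj_self (hx : polar Q x x ≠ 0) (v : V) :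
    polar Q (orthProj Q x v) x = 0 := by
  rw [polar_orthProj_left, orthProj_self hx, polar_zero_right]

theorem map_eq_map_orthProj_add (hx : polar Q x x ≠ 0) (v : V) :
    Q v = Q (orthProj Q x v) + (polar Q x v / polar Q x x) ^ 2 * Q x := by
  set c := polar Q x v / polar Q x x
  have hortho : IsOrtho Q (orthProj Q x v) (c • x) := by
    rw [← isOrtho_polarBilin, polarBilin_apply_apply, polar_smul_right,
      polar_orthProj_self hx, smul_zero]
  calc Q v = Q (orthProj Q x v + c • x) := by rw [orthProj_apply, sub_add_cancel]
    _ = _ := by rw [hortho, QuadraticMap.map_smul, smul_eq_mul, pow_two]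

theorem polar_self_ne_zero [NeZero (2 : K)] (hx : Q x ≠ 0) : polar Q x x ≠ 0 := by
  rw [polar_self, two_nsmul, ← two_mul]
  exact mul_ne_zero two_ne_zero hx

end Field

section LinearOrderedField

variable {K V : Type*} [Field K] [LinearOrder K] [AddCommGroup V] [Module K V]
  {Q : QuadraticForm K V}

theorem map_le_map_orthProj [IsStrictOrderedRing K] {x : V} (hx : Q x < 0) (v : V) :
    Q v ≤ Q (orthProj Q x v) := by
  have hv := map_eq_map_orthProj_add (polar_self_ne_zero hx.ne) v
  nlinarith [mul_nonpos_of_nonneg_of_nonpos (sq_nonneg (polar Q x v / polar Q x x)) hx.le]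

def PosDefOn (Q : QuadraticForm K V) (W : Submodule K V) : Prop :=
  ∀ w ∈ W, w ≠ 0 → 0 < Q w

def positivePlanes (Q : QuadraticForm K V) (p : ℕ) : Set (Submodule K V) :=
  {W | finrank K W = p ∧ PosDefOn Q W}

section Map

variable {f : V →ₗ[K] V} (hf : ∀ v, Q v ≤ Q (f v)) {W : Submodule K V}
include hf

theorem PosDefOn.eq_zero_of_map_eq_zero (hW : PosDefOn Q W) {w : V} (hw : w ∈ W)
    (hfw : f w = 0) : w = 0 := by
  by_contra hw0
  have := (hW w hw hw0).trans_le (hf w)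
  rw [hfw, QuadraticMap.map_zero] at this
  exact this.false

theorem PosDefOn.map (hW : PosDefOn Q W) : PosDefOn Q (W.map f) := by
  rintro _ ⟨w, hw, rfl⟩ hfw
  exact (hW w hw fun hw0 ↦ hfw (by rw [hw0, map_zero])).trans_le (hf w)

theorem PosDefOn.finrank_map (hW : PosDefOn Q W) : finrank K (W.map f) = finrank K W := by
  rw [← LinearMap.range_domRestrict, LinearMap.finrank_range_of_inj]
  rw [← LinearMap.ker_eq_bot, LinearMap.ker_eq_bot']
  rintro ⟨w, hw⟩ hfw
  exact Subtype.ext (hW.eq_zero_of_map_eq_zero hf hw hfw)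

end Map

section OrthogonalFamily

variable [IsStrictOrderedRing K] {ι : Type*} [Fintype ι] {g : ι → V}
  (horth : Pairwise fun i j ↦ polar Q (g i) (g j) = 0) (hpos : ∀ i, 0 < Q (g i))
include horth hpos

theorem map_sum_smul_pos {a : ι → K} (ha : a ≠ 0) : 0 < Q (∑ i, a i • g i) := by
  obtain ⟨i, hi⟩ := Function.ne_iff.mp ha
  rw [map_sum_smul_of_pairwise_polar_eq_zero _ horth]
  exact Finset.sum_pos' (fun j _ ↦ mul_nonneg (sq_nonneg _) (hpos j).le)
    ⟨i, Finset.mem_univ i, mul_pos (sq_pos_of_ne_zero hi) (hpos i)⟩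

theorem linearIndependent_of_pairwise_polar_eq_zero : LinearIndependent K g := by
  rw [Fintype.linearIndependent_iff]
  intro a ha
  by_contra! h
  have := map_sum_smul_pos horth hpos (Function.ne_iff.mpr h)
  rw [ha, QuadraticMap.map_zero] at this
  exact this.false

theorem posDefOn_span_range : PosDefOn Q (span K (Set.range g)) := by
  intro w hw hw0
  obtain ⟨a, rfl⟩ := (mem_span_range_iff_exists_fun K).mp hw
  refine map_sum_smul_pos horth hpos fun ha ↦ hw0 ?_
  simp [ha]

theorem span_range_mem_positivePlanes :
    span K (Set.range g) ∈ positivePlanes Q (Fintype.card ι) :=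
  ⟨finrank_span_eq_card (linearIndependent_of_pairwise_polar_eq_zero horth hpos),
    posDefOn_span_range horth hpos⟩

end OrthogonalFamily

end LinearOrderedField

end QuadraticMap

namespace HasSignature

variable {V : Type*} [AddCommGroup V] [Module ℝ V] {Q : QuadraticForm ℝ V} {p q : ℕ}

theorem separatingLeft (hsig : HasSignature Q p q) : Q.polarBilin.SeparatingLeft := by
  obtain ⟨b, horth, hpos, hneg⟩ := hsig
  refine LinearMap.IsOrthoᵢ.separatingLeft_of_not_isOrtho_basis_self b
    (fun i j hij ↦ horth i j hij) fun k ↦ ?_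
  rw [polarBilin_apply_apply, polar_self]
  cases k <;> simp [hpos, hneg]

theorem sSup_positivePlanes_eq_top (hsig : HasSignature Q p q) (hp : 1 ≤ p) :
    sSup (positivePlanes Q p) = ⊤ := by
  obtain ⟨b, horth, hpos, hneg⟩ := hsig
  set S := sSup (positivePlanes Q p)
  have mem_S : ∀ g : Fin p → V, (Pairwise fun i j ↦ polar Q (g i) (g j) = 0) →
      (∀ i, 0 < Q (g i)) → ∀ i, g i ∈ S := fun g hg_orth hg_pos i ↦ by
    have hmem := span_range_mem_positivePlanes hg_orth hg_pos
    rw [Fintype.card_fin] at hmem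
    exact le_sSup hmem (subset_span (Set.mem_range_self i))
  have horth_inl : Pairwise fun i j ↦ polar Q (b (.inl i)) (b (.inl j)) = 0 :=
    fun i j hij ↦ horth _ _ (Sum.inl_injective.ne hij)
  have hinl : ∀ i, b (.inl i) ∈ S :=
    mem_S _ horth_inl fun i ↦ by simp [hpos]
  have hinr : ∀ j, b (.inr j) ∈ S := by
    intro j
    let i₀ : Fin p := ⟨0, hp⟩
    let v := b (.inl i₀) + (2⁻¹ : ℝ) • b (.inr j)
    have hv : v ∈ S := by
      have hv_orth : ∀ k ≠ i₀, polar Q v (b (.inl k)) = 0 := fun k hk ↦ by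
        simp [v, polar_add_left, polar_smul_left, horth _ _ (Sum.inl_injective.ne hk.symm),
          horth (.inr j) (.inl k) Sum.inr_ne_inl]
      have hQv : Q v = 3 / 4 := by
        rw [QuadraticMap.map_add Q, QuadraticMap.map_smul, polar_smul_right,
          horth (.inl i₀) (.inr j) Sum.inl_ne_inr, hpos, hneg]
        norm_num
      simpa using mem_S _ (pairwise_polar_update_eq_zero horth_inl hv_orth)
        (fun i ↦ by
          rcases eq_or_ne i i₀ with rfl | hi
          · simp [hQv]
          · simp [Function.update_of_ne hi, hpos]) i₀
    have hb : b (.inr j) = (2 : ℝ) • (v - b (.inl i₀)) := by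
      simp only [v, add_sub_cancel_left, smul_smul]
      norm_num
    rw [hb]
    exact S.smul_mem _ (S.sub_mem hv (hinl i₀))
  rw [eq_top_iff, ← b.span_eq, span_le]
  rintro _ ⟨k | k, rfl⟩
  exacts [hinl k, hinr k]

end HasSignature

theorem negative_vector_determined_by_orthogonal_positive_planes_general
    {V : Type*} [AddCommGroup V] [Module ℝ V]
    (p q : ℕ) (hp : 1 ≤ p)
    (Q : QuadraticForm ℝ V) (hsig : HasSignature Q p q)
    (x y : V) (hx : Q x < 0)
    (h : ∀ W : Submodule ℝ V, Module.finrank ℝ W = p →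
      (∀ w ∈ W, w ≠ 0 → 0 < Q w) →
      (∀ w ∈ W, polar Q w x = 0) → (∀ w ∈ W, polar Q w y = 0)) :
    ∃ c : ℝ, y = c • x := by
  have hxx : polar Q x x ≠ 0 := polar_self_ne_zero hx.ne
  have hπ := map_le_map_orthProj hx
  have hle : sSup (positivePlanes Q p) ≤ LinearMap.ker (Q.polarBilin (orthProj Q x y)) := by
    refine sSup_le fun W ⟨hdim, hW⟩ w hw ↦ ?_
    have hπW := h (W.map (orthProj Q x)) (by rw [hW.finrank_map hπ, hdim]) (hW.map hπ)
      (by rintro _ ⟨u, -, rfl⟩; exact polar_orthProj_self hxx u) _ (mem_map_of_mem hw)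
    rwa [LinearMap.mem_ker, polarBilin_apply_apply, polar_comm, ← polar_orthProj_left]
  rw [hsig.sSup_positivePlanes_eq_top hp, top_le_iff, LinearMap.ker_eq_top] at hle
  have hπy : orthProj Q x y = 0 := hsig.separatingLeft _ fun v ↦ by simp [hle]
  exact ⟨_, by rwa [orthProj_apply, sub_eq_zero] at hπy⟩

/-- **A negative vector is determined up to proportionality by the positive
`p`-planes orthogonal to it.**  Let `Q` be a nondegenerate quadratic form of
signature `(p, q)`, `p, q ≥ 1`, on a finite-dimensional real vector space, and
let `x, y` have negative squares.  If every `p`-dimensional subspace on which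
`Q` is positive definite and which is orthogonal to `x` is also orthogonal to
`y`, then `y` is a scalar multiple of `x`. -/
theorem negative_vector_determined_by_orthogonal_positive_planes
    {V : Type*} [AddCommGroup V] [Module ℝ V] [FiniteDimensional ℝ V]
    (p q : ℕ) (hp : 1 ≤ p) (hq : 1 ≤ q)
    (Q : QuadraticForm ℝ V) (hsig : HasSignature Q p q)
    (x y : V) (hx : Q x < 0) (hy : Q y < 0)
    (h : ∀ W : Submodule ℝ V, Module.finrank ℝ W = p →
      (∀ w ∈ W, w ≠ 0 → 0 < Q w) →
      (∀ w ∈ W, polar Q w x = 0) → (∀ w ∈ W, polar Q w y = 0)) :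
    ∃ c : ℝ, y = c • x :=
  negative_vector_determined_by_orthogonal_positive_planes_general p q hp Q hsig x y hx h
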